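/- With notation as in the Dieudonné-module setup over an algebraically closed field k of characteristic p > 0: let φ : D₁₂ → D₁₂ be a W-linear endomorphism commuting with the operators F and V, and write φ(1,0,0) = (a,b,c) ∈ W³. Then σ³(a) = a, σ³(b) = b and σ³(c) = c; in particular the reduction ā ∈ k of a modulo p satisfies ā^{p³} = ā. The same conclusion holds for W-linear endomorphisms of D₂₁ commuting with F and V. -/
import Mathlib


noncomputable section

namespace Stmt11

variable (p : ℕ) [Fact p.Prime] (k : Type) [Field k] [CharP k p] [IsAlgClosed k]

/-- The Witt-vector Frobenius `σ`, a ring automorphism of `W = W(k)`. -/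
def σ : WittVector p k ≃+* WittVector p k := WittVector.frobeniusEquiv p k

/-- The operator `F` on `D₁₂ = W³`: `F(a,b,c) = (pσ(b), pσ(c), σ(a))`. -/
def F12 (x : Fin 3 → WittVector p k) : Fin 3 → WittVector p k :=
  ![(p : WittVector p k) * σ p k (x 1), (p : WittVector p k) * σ p k (x 2), σ p k (x 0)]

/-- The operator `V` on `D₁₂ = W³`: `V(a,b,c) = (pσ⁻¹(c), σ⁻¹(a), σ⁻¹(b))`. -/
def V12 (x : Fin 3 → WittVector p k) : Fin 3 → WittVector p k :=
  ![(p : WittVector p k) * (σ p k).symm (x 2), (σ p k).symm (x 0), (σ p k).symm (x 1)]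

/-- The operator `F` on `D₂₁ = W³`: `F(a,b,c) = (pσ(c), σ(a), σ(b))`. -/
def F21 (x : Fin 3 → WittVector p k) : Fin 3 → WittVector p k :=
  ![(p : WittVector p k) * σ p k (x 2), σ p k (x 0), σ p k (x 1)]

/-- The operator `V` on `D₂₁ = W³`: `V(a,b,c) = (pσ⁻¹(b), pσ⁻¹(c), σ⁻¹(a))`. -/
def V21 (x : Fin 3 → WittVector p k) : Fin 3 → WittVector p k :=
  ![(p : WittVector p k) * (σ p k).symm (x 1), (p : WittVector p k) * (σ p k).symm (x 2),
    (σ p k).symm (x 0)]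

/-- The element `1 = (1,0,0)` of `D₁₂` (resp. `D₂₁`). -/
def e0 : Fin 3 → WittVector p k := ![1, 0, 0]


lemma mem_span_p (z : WittVector p k) (hz : z.coeff 0 = 0) :
    z ∈ Ideal.span {(p : WittVector p k)} := by
  haveI : ExpChar k p := .prime Fact.out
  obtain ⟨w, hw⟩ := (WittVector.frobenius_bijective p k).surjective (z.shift 1)
  have hz' : z = WittVector.verschiebung (WittVector.frobenius w) := by
    rw [hw]
    simpa using WittVector.eq_iterate_verschiebung (x := z) (n := 1)
      (by intro i hi; interval_cases i; exact hz)
  rw [hz', WittVector.verschiebung_frobenius]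
  exact Ideal.mem_span_singleton.2 ⟨w, mul_comm _ _⟩

lemma mk_pow_p (x : WittVector p k) :
    Ideal.Quotient.mk (Ideal.span {(p : WittVector p k)}) (x ^ p)
      = Ideal.Quotient.mk (Ideal.span {(p : WittVector p k)}) (σ p k x) := by
  rw [Ideal.Quotient.eq]
  apply mem_span_p
  have h : WittVector.constantCoeff (σ p k x)
      = WittVector.constantCoeff x ^ p := WittVector.coeff_frobenius_charP (p := p) x 0
  simp [← WittVector.constantCoeff_apply, map_pow, h]

lemma sigma_cube_fix {y : WittVector p k} (hy : σ p k (σ p k y) = (σ p k).symm y) :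
    σ p k (σ p k (σ p k y)) = y := by
  rw [hy, RingEquiv.apply_symm_apply]

lemma mk_pow_p_cube {y : WittVector p k} (hy : σ p k (σ p k (σ p k y)) = y) :
    (Ideal.Quotient.mk (Ideal.span {(p : WittVector p k)}) y) ^ p ^ 3
      = Ideal.Quotient.mk (Ideal.span {(p : WittVector p k)}) y := by
  have hσ : ∀ z : WittVector p k,
      (Ideal.Quotient.mk (Ideal.span {(p : WittVector p k)}) z) ^ p
        = Ideal.Quotient.mk (Ideal.span {(p : WittVector p k)}) (σ p k z) := by
    intro z
    rw [← map_pow, mk_pow_p]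
  have h3 : p ^ 3 = p * p * p := by ring
  rw [h3, pow_mul, pow_mul, hσ, hσ, hσ, hy]

/-- For a `W`-linear endomorphism `φ` of `D₁₂` commuting with `F` and
`V`, writing `φ(1,0,0) = (a,b,c)` one has `σ³(a) = a`, `σ³(b) = b`, `σ³(c) = c`;
in particular the reduction `ā ∈ k = W/pW` satisfies `ā^{p³} = ā`.  The same holds for
`W`-linear endomorphisms of `D₂₁` commuting with `F` and `V`. -/
theorem stmt_11 :
    (∀ φ : (Fin 3 → WittVector p k) →ₗ[WittVector p k] (Fin 3 → WittVector p k),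
      (∀ z, φ (F12 p k z) = F12 p k (φ z)) → (∀ z, φ (V12 p k z) = V12 p k (φ z)) →
        (σ p k (σ p k (σ p k (φ (e0 p k) 0))) = φ (e0 p k) 0 ∧
         σ p k (σ p k (σ p k (φ (e0 p k) 1))) = φ (e0 p k) 1 ∧
         σ p k (σ p k (σ p k (φ (e0 p k) 2))) = φ (e0 p k) 2 ∧
         (Ideal.Quotient.mk (Ideal.span {(p : WittVector p k)}) (φ (e0 p k) 0)) ^ p ^ 3
            = Ideal.Quotient.mk (Ideal.span {(p : WittVector p k)}) (φ (e0 p k) 0))) ∧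
    (∀ ψ : (Fin 3 → WittVector p k) →ₗ[WittVector p k] (Fin 3 → WittVector p k),
      (∀ z, ψ (F21 p k z) = F21 p k (ψ z)) → (∀ z, ψ (V21 p k z) = V21 p k (ψ z)) →
        (σ p k (σ p k (σ p k (ψ (e0 p k) 0))) = ψ (e0 p k) 0 ∧
         σ p k (σ p k (σ p k (ψ (e0 p k) 1))) = ψ (e0 p k) 1 ∧
         σ p k (σ p k (σ p k (ψ (e0 p k) 2))) = ψ (e0 p k) 2 ∧
         (Ideal.Quotient.mk (Ideal.span {(p : WittVector p k)}) (ψ (e0 p k) 0)) ^ p ^ 3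
            = Ideal.Quotient.mk (Ideal.span {(p : WittVector p k)}) (ψ (e0 p k) 0)))  := by
  have hp0 : (p : WittVector p k) ≠ 0 := WittVector.p_nonzero p k
  constructor
  · intro φ hF hV
    set x := φ (e0 p k) with hx
    have h1 : F12 p k (F12 p k (e0 p k)) = (p : WittVector p k) • V12 p k (e0 p k) := by
      funext i
      fin_cases i <;> simp [F12, V12, e0, smul_eq_mul]
    have h2 : F12 p k (F12 p k x) = (p : WittVector p k) • V12 p k x := by
      calc F12 p k (F12 p k x) = φ (F12 p k (F12 p k (e0 p k))) := by rw [hF, hF]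
        _ = φ ((p : WittVector p k) • V12 p k (e0 p k)) := by rw [h1]
        _ = (p : WittVector p k) • φ (V12 p k (e0 p k)) := map_smul φ _ _
        _ = (p : WittVector p k) • V12 p k x := by rw [hV]
    have c0 := congrFun h2 0
    have c1 := congrFun h2 1
    have c2 := congrFun h2 2
    simp only [F12, V12, Matrix.cons_val_zero, Matrix.cons_val_one, Matrix.head_cons,
      Matrix.cons_val_two, Matrix.tail_cons,
      Pi.smul_apply, smul_eq_mul, map_mul, map_natCast] at c0 c1 c2
    have e0' : σ p k (σ p k (σ p k (x 0))) = x 0 :=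
      sigma_cube_fix p k (mul_left_cancel₀ hp0 c1)
    have e1' : σ p k (σ p k (σ p k (x 1))) = x 1 :=
      sigma_cube_fix p k (mul_left_cancel₀ hp0 c2)
    have e2' : σ p k (σ p k (σ p k (x 2))) = x 2 :=
      sigma_cube_fix p k (mul_left_cancel₀ hp0 (mul_left_cancel₀ hp0 c0))
    exact ⟨e0', e1', e2', mk_pow_p_cube p k e0'⟩
  · intro ψ hF hV
    set x := ψ (e0 p k) with hx
    have h1 : F21 p k (F21 p k (e0 p k)) = V21 p k (e0 p k) := by
      funext i
      fin_cases i <;> simp [F21, V21, e0]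
    have h2 : F21 p k (F21 p k x) = V21 p k x := by
      calc F21 p k (F21 p k x) = ψ (F21 p k (F21 p k (e0 p k))) := by rw [hF, hF]
        _ = ψ (V21 p k (e0 p k)) := by rw [h1]
        _ = V21 p k x := hV _
    have c0 := congrFun h2 0
    have c1 := congrFun h2 1
    have c2 := congrFun h2 2
    simp only [F21, V21, Matrix.cons_val_zero, Matrix.cons_val_one, Matrix.head_cons,
      Matrix.cons_val_two, Matrix.tail_cons, map_mul, map_natCast] at c0 c1 c2
    have e0' : σ p k (σ p k (σ p k (x 0))) = x 0 := sigma_cube_fix p k c2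
    have e1' : σ p k (σ p k (σ p k (x 1))) = x 1 :=
      sigma_cube_fix p k (mul_left_cancel₀ hp0 c0)
    have e2' : σ p k (σ p k (σ p k (x 2))) = x 2 :=
      sigma_cube_fix p k (mul_left_cancel₀ hp0 c1)
    exact ⟨e0', e1', e2', mk_pow_p_cube p k e0'⟩


end Stmt11
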